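/- arXiv:1603.01744 — 2 statements merged into one kernel-verified Lean document; each statement's English description precedes it below -/
import Mathlib

section
/- Let M ≥ 2, d ≥ 2, let A = (A_1,…,A_M) be an irreducible tuple of d×d real matrices, let s > 0, and let μ be a σ-invariant Borel probability measure on Σ_M satisfying the Gibbs inequality for (A,s) with some constants C > 0 and P ∈ ℝ. Suppose there exist integers n, r ≥ 1 with nr = d, symbols ω_1,…,ω_n ∈ {1,…,M}, and linear subspaces R_1,…,R_n of ℝ^d, each of dimension r, such that ℝ^d is the internal direct sum R_1 ⊕ ⋯ ⊕ R_n, A_i R_j = {0} whenever i ≠ ω_j, A_{ω_j} R_j = R_{j+1} for 1 ≤ j < n and A_{ω_n} R_n = R_1, for each i = 1,…,n the product A_{ω_{i−1}}⋯A_{ω_1}A_{ω_n}⋯A_{ω_i} maps R_i bijectively onto itself, and A_{x_n}⋯A_{x_1} ≠ 0 if and only if (x_1,…,x_n) is a cyclic permutation of (ω_1,…,ω_n). Then μ is supported on a periodic orbit: for the point z ∈ Σ_M defined by z_{qn+r} = ω_r (for all q ≥ 0 and 1 ≤ r ≤ n) one has σ^n z = z and the topological support of μ is contained in {z, σz, …,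 σ^{n−1}z}. -/
/-
A cylinder whose matrix product vanishes has measure zero by the lower Gibbs bound, and by shift
invariance so do its preimages under `σ^k`. Hence `μ`-almost every point has all its length-`n`
windows among the cyclic rotations of `ω`. Consecutive windows overlap in `n - 1` symbols, and a
rotation of `ω` is determined by any `n - 1` consecutive values, so the rotation index advances by
one from each window to the next and the point lies on the orbit of `z`.
-/

open MeasureTheory Filter Topology

/-- The operator norm on square real matrices induced by the Euclidean norm. -/
noncomputable def opNorm {n : Type*} [Fintype n] [DecidableEq n]
    (X : Matrix n n ℝ) : ℝ :=
  ‖Matrix.toEuclideanCLM (𝕜 := ℝ) X‖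

/-- The spectral radius `ρ(X) = inf_{k ≥ 1} ‖X^k‖^(1/k)` (Gelfand). -/
noncomputable def specRad {n : Type*} [Fintype n] [DecidableEq n]
    (X : Matrix n n ℝ) : ℝ :=
  ⨅ k : ℕ, opNorm (X ^ (k + 1)) ^ ((1 : ℝ) / (k + 1))

/-- The product `A_{x_n} ⋯ A_{x_1}` associated to the word `x = (x_1, …, x_n)`. -/
noncomputable def wordProd {M d n : ℕ} (A : Fin M → Matrix (Fin d) (Fin d) ℝ)
    (x : Fin n → Fin M) : Matrix (Fin d) (Fin d) ℝ :=
  (List.ofFn (fun i => A (x i))).reverse.prod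

/-- The product `A_{x_n} ⋯ A_{x_1}` associated to the word `w = [x_1, …, x_n]`. -/
noncomputable def listProd {M d : ℕ} (A : Fin M → Matrix (Fin d) (Fin d) ℝ)
    (w : List (Fin M)) : Matrix (Fin d) (Fin d) ℝ :=
  ((w.map A).reverse).prod

/-- Irreducibility: no invariant subspace `U` with `0 < dim U < d`. -/
def IsIrredTuple {M d : ℕ} (A : Fin M → Matrix (Fin d) (Fin d) ℝ) : Prop :=
  ¬ ∃ U : Submodule ℝ (Fin d → ℝ),
      (∀ i, U.map (A i).mulVecLin ≤ U) ∧ U ≠ ⊥ ∧ U ≠ ⊤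

/-- The shift map on `Σ_M = {1,…,M}^ℕ`. -/
def shift {M : ℕ} : (ℕ → Fin M) → (ℕ → Fin M) := fun x n => x (n + 1)

/-- The cylinder set `[x_1 ⋯ x_n]` determined by the word `w = [x_1, …, x_n]`. -/
def cyl {M : ℕ} (w : List (Fin M)) : Set (ℕ → Fin M) :=
  {y | ∀ i : Fin w.length, y (i : ℕ) = w.get i}

/-- The Gibbs inequality for `(A, s)` with constants `C > 0`, `P ∈ ℝ`. -/
def IsGibbs {M d : ℕ} (A : Fin M → Matrix (Fin d) (Fin d) ℝ) (s C P : ℝ)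
    (μ : Measure (ℕ → Fin M)) : Prop :=
  ∀ w : List (Fin M), w ≠ [] →
    C⁻¹ * (μ (cyl w)).toReal ≤ Real.exp (-(w.length : ℝ) * P) * opNorm (listProd A w) ^ s ∧
    Real.exp (-(w.length : ℝ) * P) * opNorm (listProd A w) ^ s ≤ C * (μ (cyl w)).toReal

/-- The pressure `P(A,s) = inf_{n ≥ 1} (1/n) log Σ_{|x| = n} ‖A_{x_n} ⋯ A_{x_1}‖^s ∈ [-∞, ∞)`,
with the convention that a term is `-∞` when the corresponding sum vanishes. -/
noncomputable def pressure {M d : ℕ} (A : Fin M → Matrix (Fin d) (Fin d) ℝ) (s : ℝ) : EReal :=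
  ⨅ n : ℕ,
    if (∑ x : Fin (n + 1) → Fin M, opNorm (wordProd A x) ^ s) = 0 then (⊥ : EReal)
    else ((Real.log (∑ x : Fin (n + 1) → Fin M, opNorm (wordProd A x) ^ s) / (n + 1) : ℝ) : EReal)

open Fin.NatCast

theorem Equiv.Perm.comp_eq_of_eqOn_compl_singleton {ι α : Type*} [Fintype ι] [DecidableEq ι]
    (e : Equiv.Perm ι) {f : ι → α} {m : ι} (h : Set.EqOn (f ∘ e) f {m}ᶜ) : f ∘ e = f := by
  funext j
  rcases eq_or_ne j m with rfl | hj
  · -- `f ∘ e` and `f` take the same multiset of values, and they agree off `m`.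
    have hmap : Finset.univ.val.map (f ∘ e) = Finset.univ.val.map f := by
      rw [← Multiset.map_map, Multiset.map_univ_val_equiv]
    rw [← Multiset.cons_erase (Finset.mem_univ_val j), Multiset.map_cons, Multiset.map_cons,
      ← Finset.erase_val, Multiset.map_congr rfl fun x hx => h (Finset.ne_of_mem_erase hx)]
      at hmap
    exact (Multiset.cons_inj_left _).1 hmap
  · exact h hj

theorem Fin.apply_add_eq_of_forall_succ_lt {α : Type*} {n : ℕ} [NeZero n] {ω : Fin n → α}
    {i i' : Fin n} (h : ∀ j : Fin n, (j : ℕ) + 1 < n → ω (i' + j) = ω (i + j)) (j : Fin n) :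
    ω (i' + j) = ω (i + j) := by
  have hrot : ω ∘ Equiv.addRight (i' - i) = ω := by
    refine (Equiv.addRight (i' - i)).comp_eq_of_eqOn_compl_singleton
      (m := i + ↑(n - 1)) fun x hx => ?_
    have hlt : ((x - i : Fin n) : ℕ) + 1 < n := by
      by_contra hle
      refine hx (sub_eq_iff_eq_add'.1 (Fin.ext ?_))
      rw [Fin.val_natCast, Nat.mod_eq_of_lt (Nat.sub_lt (NeZero.pos n) Nat.one_pos)]
      omega
    show ω (x + (i' - i)) = ω x
    rw [show x + (i' - i) = i' + (x - i) by abel, h (x - i) hlt, add_sub_cancel]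
  have hj : ω (i + j + (i' - i)) = ω (i + j) := congrFun hrot (i + j)
  rwa [show i + j + (i' - i) = i' + j by abel] at hj

theorem exists_forall_eq_rotation_of_forall_window {α : Type*} {n : ℕ} [NeZero n]
    {ω : Fin n → α} {y : ℕ → α} (h : ∀ k, ∃ i : Fin n, ∀ j : Fin n, y (k + j) = ω (i + j)) :
    ∃ i : Fin n, ∀ m, y m = ω (i + m) := by
  obtain ⟨i₀, h₀⟩ := h 0
  refine ⟨i₀, fun m => ?_⟩
  suffices key : ∀ k, ∀ j : Fin n, y (k + j) = ω (i₀ + ↑(k + (j : ℕ))) by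
    simpa using key m 0
  intro k
  induction k with
  | zero => simpa using h₀
  | succ k ih =>
    obtain ⟨i, hi⟩ := h (k + 1)
    have hinit : ∀ j : Fin n, (j : ℕ) + 1 < n → ω (i + j) = ω (i₀ + ↑(k + 1) + j) := by
      intro j hj
      rw [← hi j, show k + 1 + (j : ℕ) = k + ((⟨j + 1, hj⟩ : Fin n) : ℕ) by dsimp only; omega,
        ih ⟨j + 1, hj⟩]
      congr 1
      push_cast
      abel
    intro j
    rw [hi j, Fin.apply_add_eq_of_forall_succ_lt hinit j]
    congr 1
    push_cast
    abel

theorem opNorm_zero {ι : Type*} [Fintype ι] [DecidableEq ι] :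
    opNorm (0 : Matrix ι ι ℝ) = 0 := by
  simp [opNorm]

theorem measurableSet_cyl {M : ℕ} (w : List (Fin M)) : MeasurableSet (cyl w) := by
  have hcyl : cyl w = ⋂ i : Fin w.length, (fun y : ℕ → Fin M => y i) ⁻¹' {w.get i} := by
    ext y
    simp [cyl]
  rw [hcyl]
  exact .iInter fun i => measurable_pi_apply _ (measurableSet_singleton _)

theorem shift_iterate_apply {M : ℕ} (k : ℕ) (x : ℕ → Fin M) (q : ℕ) :
    shift^[k] x q = x (q + k) := by
  induction k generalizing x with
  | zero => rfl
  | succ k ih => rw [Function.iterate_succ_apply, ih]; rfl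

theorem preimage_shift_iterate_cyl_ofFn {M n : ℕ} (k : ℕ) (w : Fin n → Fin M) :
    shift^[k] ⁻¹' cyl (List.ofFn w) = {y | (fun j : Fin n => y (k + j)) = w} := by
  ext y
  simp only [Set.mem_preimage, cyl, Set.mem_ofPred_eq, shift_iterate_apply, funext_iff]
  constructor
  · intro h j
    simpa [add_comm] using h (Fin.cast List.length_ofFn.symm j)
  · intro h i
    simpa [add_comm, Fin.cast] using h (Fin.cast List.length_ofFn i)

theorem listProd_ofFn {M d n : ℕ} (A : Fin M → Matrix (Fin d) (Fin d) ℝ) (w : Fin n → Fin M) :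
    listProd A (List.ofFn w) = wordProd A w := by
  simp [listProd, wordProd, List.map_ofFn, Function.comp_def]

theorem IsGibbs.measure_cyl_eq_zero {M d : ℕ} {A : Fin M → Matrix (Fin d) (Fin d) ℝ}
    {s C P : ℝ} {μ : Measure (ℕ → Fin M)} [IsFiniteMeasure μ] (hG : IsGibbs A s C P μ)
    (hs : 0 < s) (hC : 0 < C) {w : List (Fin M)} (hw : w ≠ []) (h0 : listProd A w = 0) :
    μ (cyl w) = 0 := by
  have hlow := (hG w hw).1
  rw [h0, opNorm_zero, Real.zero_rpow hs.ne', mul_zero] at hlow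
  have hreal : (μ (cyl w)).toReal = 0 :=
    le_antisymm (nonpos_of_mul_nonpos_right hlow (inv_pos.2 hC)) ENNReal.toReal_nonneg
  exact ((ENNReal.toReal_eq_zero_iff _).1 hreal).resolve_right (measure_ne_top μ _)

theorem IsGibbs.ae_wordProd_window_ne_zero {M d : ℕ} {A : Fin M → Matrix (Fin d) (Fin d) ℝ}
    {s C P : ℝ} {μ : Measure (ℕ → Fin M)} [IsFiniteMeasure μ] (hG : IsGibbs A s C P μ)
    (hs : 0 < s) (hC : 0 < C) (hinv : MeasurePreserving shift μ μ) (n : ℕ) [NeZero n] :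
    ∀ᵐ y ∂μ, ∀ k : ℕ, wordProd A (fun j : Fin n => y (k + j)) ≠ 0 := by
  have hword : ∀ k (w : Fin n → Fin M), wordProd A w = 0 →
      μ {y | (fun j : Fin n => y (k + j)) = w} = 0 := by
    intro k w hw
    rw [← preimage_shift_iterate_cyl_ofFn,
      (hinv.iterate k).measure_preimage (measurableSet_cyl _).nullMeasurableSet]
    refine hG.measure_cyl_eq_zero hs hC ?_ (by rwa [listProd_ofFn])
    simpa using NeZero.ne n
  simp only [ae_iff, not_forall, not_not]
  refine measure_mono_null (t := ⋃ (k : ℕ) (w : Fin n → Fin M) (_ : wordProd A w = 0),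
      {y | (fun j : Fin n => y (k + j)) = w})
    (fun y ⟨k, hk⟩ => Set.mem_iUnion₂.2 ⟨k, _, Set.mem_iUnion.2 ⟨hk, rfl⟩⟩)
    (measure_iUnion_null fun k => measure_iUnion_null fun w =>
      measure_iUnion_null fun hw => hword k w hw)

theorem stmt_8_general {M d : ℕ}
    (A : Fin M → Matrix (Fin d) (Fin d) ℝ)
    (s : ℝ) (hs : 0 < s)
    (μ : Measure (ℕ → Fin M)) [IsProbabilityMeasure μ]
    (hinv : MeasurePreserving (shift (M := M)) μ μ)
    (C P : ℝ) (hC : 0 < C) (hG : IsGibbs A s C P μ)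
    (n : ℕ) [NeZero n]
    (ω : Fin n → Fin M)
    (hne : ∀ x : Fin n → Fin M,
      wordProd A x ≠ 0 ↔ ∃ i : Fin n, ∀ k : Fin n, x k = ω (i + k)) :
    ∀ z : ℕ → Fin M, (∀ q : ℕ, z q = ω ⟨q % n, Nat.mod_lt q (Nat.pos_of_ne_zero (NeZero.ne n))⟩) →
      shift^[n] z = z ∧
      ∀ U : Set (ℕ → Fin M), IsOpen U →
        Disjoint U {y | ∃ i < n, y = shift^[i] z} → μ U = 0 := by
  intro z hz
  replace hz : ∀ q : ℕ, z q = ω q := hz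
  refine ⟨funext fun q => by rw [shift_iterate_apply, hz, hz, Nat.cast_add, Fin.natCast_self,
    add_zero], fun U _ hdisj => ?_⟩
  have hae : ∀ᵐ y ∂μ, ∃ i < n, y = shift^[i] z := by
    filter_upwards [hG.ae_wordProd_window_ne_zero hs hC hinv n] with y hy
    obtain ⟨i, hi⟩ := exists_forall_eq_rotation_of_forall_window fun k => (hne _).1 (hy k)
    refine ⟨i, i.isLt, funext fun m => ?_⟩
    rw [hi, shift_iterate_apply, hz, Nat.cast_add, Fin.cast_val_eq_self, add_comm]
  exact measure_mono_null (fun y hyU hy => Set.disjoint_left.1 hdisj hyU hy) (ae_iff.1 hae)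

/-- under the degenerate algebraic condition (iii) of Theorem 3.1, the Gibbs
measure is supported on the periodic orbit of `z = (ω_1 ω_2 ⋯ ω_n)^∞`. -/
theorem stmt_8 {M d : ℕ} (hM : 2 ≤ M) (hd : 2 ≤ d)
    (A : Fin M → Matrix (Fin d) (Fin d) ℝ) (hA : IsIrredTuple A)
    (s : ℝ) (hs : 0 < s)
    (μ : Measure (ℕ → Fin M)) [IsProbabilityMeasure μ]
    (hinv : MeasurePreserving (shift (M := M)) μ μ)
    (C P : ℝ) (hC : 0 < C) (hG : IsGibbs A s C P μ)
    (n r : ℕ) [NeZero n] (hr : 0 < r) (hnr : n * r = d)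
    (ω : Fin n → Fin M) (R : Fin n → Submodule ℝ (Fin d → ℝ))
    (hdim : ∀ j, Module.finrank ℝ (R j) = r)
    (hsum : DirectSum.IsInternal R)
    (hzero : ∀ (i : Fin M) (j : Fin n), i ≠ ω j → (R j).map (A i).mulVecLin = ⊥)
    (hcyc : ∀ j : Fin n, (R j).map (A (ω j)).mulVecLin = R (j + 1))
    (hbij : ∀ i : Fin n,
      Set.BijOn (fun v => (wordProd A (fun k : Fin n => ω (i + k))).mulVec v)
        (R i : Set (Fin d → ℝ)) (R i : Set (Fin d → ℝ)))
    (hne : ∀ x : Fin n → Fin M,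
      wordProd A x ≠ 0 ↔ ∃ i : Fin n, ∀ k : Fin n, x k = ω (i + k)) :
    ∀ z : ℕ → Fin M, (∀ q : ℕ, z q = ω ⟨q % n, Nat.mod_lt q (Nat.pos_of_ne_zero (NeZero.ne n))⟩) →
      shift^[n] z = z ∧
      ∀ U : Set (ℕ → Fin M), IsOpen U →
        Disjoint U {y | ∃ i < n, y = shift^[i] z} → μ U = 0 :=
  stmt_8_general A s hs μ hinv C P hC hG n ω hne
end

section
/- Let M ≥ 2, let A = (A_1,…,A_M) be an irreducible tuple of d×d real matrices, let s > 0, and let μ be a Bernoulli measure on Σ_M (the infinite product measure ν^ℕ of a probability measure ν on {1,…,M}) which satisfies the Gibbs inequality for (A,s) with some constants C > 0 and P ∈ ℝ. Then the spectral radius is multiplicative on the semigroup generated by A_1,…,A_M: for every pair of finite products B_1 = A_{x_m}⋯A_{x_1} and B_2 = A_{y_k}⋯A_{y_1} (m, k ≥ 1) one has ρ(B_1 B_2) = ρ(B_1) ρ(B_2). -/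
open MeasureTheory Filter Topology

/- ### Auxiliary lemmas -/

lemma opNorm_pow_le' {n : Type*} [Fintype n] [DecidableEq n] (X : Matrix n n ℝ)
    (m : ℕ) (hm : 0 < m) : opNorm (X ^ m) ≤ opNorm X ^ m := by
  unfold opNorm; rw [map_pow]; exact norm_pow_le' _ hm

/-- If `a^m ≥ c * b^m` for all `m ≥ 1` with `c > 0` and `a, b ≥ 0`, then `b ≤ a`. -/
lemma le_of_pow_bounds (a b c : ℝ) (ha : 0 ≤ a) (hc : 0 < c)
    (h : ∀ m : ℕ, 0 < m → c * b ^ m ≤ a ^ m) : b ≤ a := by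
  by_contra hlt
  push_neg at hlt
  have hbpos : 0 < b := lt_of_le_of_lt ha hlt
  have hab : a / b < 1 := (div_lt_one hbpos).2 hlt
  have hab0 : 0 ≤ a / b := div_nonneg ha hbpos.le
  have ht : Tendsto (fun m : ℕ => (a / b) ^ m) atTop (𝓝 0) :=
    tendsto_pow_atTop_nhds_zero_of_lt_one hab0 hab
  obtain ⟨m, hm1, hm2⟩ :=
    ((ht.eventually (eventually_lt_nhds hc)).and (eventually_gt_atTop 0)).exists
  have hdiv : c ≤ (a / b) ^ m := by
    rw [div_pow, le_div_iff₀ (pow_pos hbpos m)]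
    linarith [h m hm2]
  linarith

/-- If `c1 * r^m ≤ ‖X^m‖ ≤ c2 * r^m` for all `m ≥ 1`, then the spectral radius of `X` is `r`. -/
lemma specRad_eq_of_bounds {n : Type*} [Fintype n] [DecidableEq n]
    (X : Matrix n n ℝ) (r c1 c2 : ℝ) (hr : 0 ≤ r) (hc1 : 0 < c1) (hc2 : 0 < c2)
    (hlow : ∀ m : ℕ, 0 < m → c1 * r ^ m ≤ opNorm (X ^ m))
    (hup : ∀ m : ℕ, 0 < m → opNorm (X ^ m) ≤ c2 * r ^ m) :
    specRad X = r := by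
  have hNn : ∀ m : ℕ, 0 ≤ opNorm (X ^ m) := fun m => norm_nonneg _
  apply le_antisymm
  · have key : ∀ k : ℕ, specRad X ≤ c2 ^ ((1:ℝ)/(k+1)) * r := by
      intro k
      have hk1 : (0:ℝ) < (k:ℝ) + 1 := by positivity
      have h1 : specRad X ≤ opNorm (X ^ (k+1)) ^ ((1:ℝ)/(k+1)) := by
        apply ciInf_le ⟨0, ?_⟩ k
        rintro z ⟨j, rfl⟩
        exact Real.rpow_nonneg (hNn _) _
      refine h1.trans ?_
      have h2 : opNorm (X ^ (k+1)) ^ ((1:ℝ)/(k+1)) ≤ (c2 * r ^ (k+1)) ^ ((1:ℝ)/(k+1)) :=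
        Real.rpow_le_rpow (hNn _) (hup (k+1) (Nat.succ_pos k)) (by positivity)
      refine h2.trans_eq ?_
      rw [Real.mul_rpow hc2.le (by positivity), ← Real.rpow_natCast r (k+1),
        ← Real.rpow_mul hr]
      push_cast
      rw [mul_one_div, div_self hk1.ne', Real.rpow_one]
    have ht : Tendsto (fun k : ℕ => c2 ^ ((1:ℝ)/(k+1)) * r) atTop (𝓝 r) := by
      have h0 : Tendsto (fun k : ℕ => (1:ℝ)/(k+1)) atTop (𝓝 0) :=
        tendsto_one_div_add_atTop_nhds_zero_nat
      have h1 : Tendsto (fun k : ℕ => c2 ^ ((1:ℝ)/(k+1))) atTop (𝓝 (c2 ^ (0:ℝ))) :=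
        Tendsto.rpow tendsto_const_nhds h0 (Or.inl hc2.ne')
      rw [Real.rpow_zero] at h1
      simpa using h1.mul_const r
    exact ge_of_tendsto' ht key
  · apply le_ciInf
    intro k
    have hk1 : (0:ℝ) < (k:ℝ) + 1 := by positivity
    have hb : r ^ (k+1) ≤ opNorm (X ^ (k+1)) := by
      apply le_of_pow_bounds _ _ c1 (hNn _) hc1
      intro m hm
      have h1 : c1 * r ^ ((k+1)*m) ≤ opNorm (X ^ ((k+1)*m)) :=
        hlow _ (Nat.mul_pos (Nat.succ_pos k) hm)
      have h2 : opNorm (X ^ ((k+1)*m)) ≤ opNorm (X ^ (k+1)) ^ m := by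
        rw [pow_mul]
        exact opNorm_pow_le' _ m hm
      calc c1 * (r ^ (k+1)) ^ m = c1 * r ^ ((k+1)*m) := by rw [← pow_mul]
        _ ≤ _ := h1.trans h2
    calc r = (r ^ (k+1)) ^ ((1:ℝ)/(k+1)) := by
          rw [← Real.rpow_natCast r (k+1), ← Real.rpow_mul hr]
          push_cast
          rw [mul_one_div, div_self hk1.ne', Real.rpow_one]
      _ ≤ _ := Real.rpow_le_rpow (by positivity) hb (by positivity)

lemma listProd_append {M d : ℕ} (A : Fin M → Matrix (Fin d) (Fin d) ℝ) (u v : List (Fin M)) :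
    listProd A (u ++ v) = listProd A v * listProd A u := by
  simp [listProd, List.map_append, List.reverse_append, List.prod_append]

lemma wordProd_eq {M d n : ℕ} (A : Fin M → Matrix (Fin d) (Fin d) ℝ) (x : Fin n → Fin M) :
    wordProd A x = listProd A (List.ofFn x) := by
  simp [wordProd, listProd, List.map_ofFn, Function.comp_def]

lemma listProd_join_replicate {M d : ℕ} (A : Fin M → Matrix (Fin d) (Fin d) ℝ)
    (w : List (Fin M)) (m : ℕ) :
    listProd A ((List.replicate m w).flatten) = (listProd A w) ^ m := by
  induction m with
  | zero => simp [listProd]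
  | succ m ih =>
    rw [List.replicate_succ, List.flatten_cons, listProd_append, ih, pow_succ]

lemma rList_join_replicate {M : ℕ} (q : Fin M → ℝ) (w : List (Fin M)) (m : ℕ) :
    (((List.replicate m w).flatten).map q).prod = ((w.map q).prod) ^ m := by
  induction m with
  | zero => simp
  | succ m ih =>
    rw [List.replicate_succ, List.flatten_cons, List.map_append, List.prod_append, ih, pow_succ]
    ring

lemma toReal_list_prod {M : ℕ} (p : Fin M → ENNReal) (w : List (Fin M)) :
    ((w.map p).prod).toReal = (w.map (fun i => (p i).toReal)).prod := by
  induction w with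
  | nil => simp
  | cons a w ih => simp [ENNReal.toReal_mul, ih]

lemma exp_mul_prod_rpow {M : ℕ} (P s : ℝ) (p : Fin M → ENNReal) (w : List (Fin M)) :
    (Real.exp ((w.length : ℝ) * P) * (w.map (fun i => (p i).toReal)).prod) ^ ((1:ℝ)/s)
      = (w.map (fun i => (Real.exp P * (p i).toReal) ^ ((1:ℝ)/s))).prod := by
  induction w with
  | nil => simp
  | cons a w ih =>
    have hprod : 0 ≤ (w.map (fun i => (p i).toReal)).prod :=
      List.prod_nonneg (by simp +contextual [ENNReal.toReal_nonneg])
    have h1 : (((a :: w).length : ℝ) * P) = P + (w.length : ℝ) * P := by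
      push_cast [List.length_cons]; ring
    rw [List.map_cons, List.prod_cons, List.map_cons, List.prod_cons, h1, Real.exp_add]
    rw [show Real.exp P * Real.exp ((w.length : ℝ) * P) * ((p a).toReal *
        (w.map (fun i => (p i).toReal)).prod)
      = (Real.exp P * (p a).toReal) *
        (Real.exp ((w.length : ℝ) * P) * (w.map (fun i => (p i).toReal)).prod) by ring]
    rw [Real.mul_rpow (by positivity) (by positivity), ih]

/-- if a Gibbs measure for an irreducible tuple is a Bernoulli measure, then the
spectral radius is multiplicative on the generated semigroup (Theorem 5.1, first direction). -/
theorem stmt_13 {M d : ℕ} (hM : 2 ≤ M)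
    (A : Fin M → Matrix (Fin d) (Fin d) ℝ) (hA : IsIrredTuple A)
    (s : ℝ) (hs : 0 < s)
    (μ : Measure (ℕ → Fin M)) [IsProbabilityMeasure μ]
    (p : Fin M → ENNReal) (hp : ∑ i, p i = 1)
    (hBer : ∀ w : List (Fin M), μ (cyl w) = (w.map p).prod)
    (C P : ℝ) (hC : 0 < C) (hG : IsGibbs A s C P μ) :
    ∀ (m k : ℕ), 0 < m → 0 < k → ∀ (x : Fin m → Fin M) (y : Fin k → Fin M),
      specRad (wordProd A x * wordProd A y) = specRad (wordProd A x) * specRad (wordProd A y) := by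
  set q : Fin M → ℝ := fun i => (Real.exp P * (p i).toReal) ^ ((1:ℝ)/s) with hq
  set R : List (Fin M) → ℝ := fun w => (w.map q).prod with hR
  have hRnn : ∀ w, 0 ≤ R w := by
    intro w
    apply List.prod_nonneg
    intro z hz
    simp only [List.mem_map] at hz
    obtain ⟨i, _, rfl⟩ := hz
    exact Real.rpow_nonneg (by positivity) _
  set c1 : ℝ := C⁻¹ ^ ((1:ℝ)/s) with hc1def
  set c2 : ℝ := C ^ ((1:ℝ)/s) with hc2def
  have hc1 : 0 < c1 := Real.rpow_pos_of_pos (by positivity) _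
  have hc2 : 0 < c2 := Real.rpow_pos_of_pos hC _
  -- key norm bounds from the Gibbs inequality
  have key : ∀ w : List (Fin M), w ≠ [] →
      c1 * R w ≤ opNorm (listProd A w) ∧ opNorm (listProd A w) ≤ c2 * R w := by
    intro w hw
    obtain ⟨h1, h2⟩ := hG w hw
    set N : ℝ := opNorm (listProd A w) with hN
    have hNnn : 0 ≤ N := norm_nonneg _
    set Q : ℝ := Real.exp ((w.length : ℝ) * P) * (w.map (fun i => (p i).toReal)).prod with hQ
    have hprodnn : 0 ≤ (w.map (fun i => (p i).toReal)).prod :=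
      List.prod_nonneg (by simp +contextual [ENNReal.toReal_nonneg])
    have hQnn : 0 ≤ Q := by positivity
    have hμ : (μ (cyl w)).toReal = (w.map (fun i => (p i).toReal)).prod := by
      rw [hBer, toReal_list_prod]
    rw [hμ] at h1 h2
    have hexp : Real.exp (-(w.length : ℝ) * P) * Real.exp ((w.length : ℝ) * P) = 1 := by
      rw [← Real.exp_add]; ring_nf; exact Real.exp_zero
    have hNsQ : (N ^ s) ^ ((1:ℝ)/s) = N := by
      rw [← Real.rpow_mul hNnn, mul_one_div, div_self hs.ne', Real.rpow_one]
    have e2 : N ^ s ≤ C * Q := by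
      have h3 := mul_le_mul_of_nonneg_left h2 (Real.exp_pos ((w.length:ℝ)*P)).le
      calc N ^ s = Real.exp ((w.length:ℝ)*P) * (Real.exp (-(w.length:ℝ)*P) * N ^ s) := by
            rw [← mul_assoc,
              mul_comm (Real.exp ((w.length:ℝ)*P)) (Real.exp (-(w.length:ℝ)*P)), hexp, one_mul]
        _ ≤ Real.exp ((w.length:ℝ)*P) * (C * (w.map fun i => (p i).toReal).prod) := h3
        _ = C * Q := by rw [hQ]; ring
    have e1 : C⁻¹ * Q ≤ N ^ s := by
      have h3 := mul_le_mul_of_nonneg_left h1 (Real.exp_pos ((w.length:ℝ)*P)).le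
      calc C⁻¹ * Q = Real.exp ((w.length:ℝ)*P) * (C⁻¹ * (w.map fun i => (p i).toReal).prod) := by
            rw [hQ]; ring
        _ ≤ Real.exp ((w.length:ℝ)*P) * (Real.exp (-(w.length:ℝ)*P) * N ^ s) := h3
        _ = N ^ s := by
            rw [← mul_assoc,
              mul_comm (Real.exp ((w.length:ℝ)*P)) (Real.exp (-(w.length:ℝ)*P)), hexp, one_mul]
    have hQR : Q ^ ((1:ℝ)/s) = R w := by
      rw [hQ, exp_mul_prod_rpow P s p w]
    constructor
    · calc c1 * R w = (C⁻¹ * Q) ^ ((1:ℝ)/s) := by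
            rw [Real.mul_rpow (by positivity) hQnn, hQR, hc1def]
        _ ≤ (N ^ s) ^ ((1:ℝ)/s) := Real.rpow_le_rpow (by positivity) e1 (by positivity)
        _ = N := hNsQ
    · calc N = (N ^ s) ^ ((1:ℝ)/s) := hNsQ.symm
        _ ≤ (C * Q) ^ ((1:ℝ)/s) :=
            Real.rpow_le_rpow (Real.rpow_nonneg hNnn s) e2 (by positivity)
        _ = c2 * R w := by rw [Real.mul_rpow hC.le hQnn, hQR, hc2def]
  -- spectral radius of any nonempty word product equals R
  have sR : ∀ w : List (Fin M), w ≠ [] → specRad (listProd A w) = R w := by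
    intro w hw
    apply specRad_eq_of_bounds _ _ c1 c2 (hRnn w) hc1 hc2
    all_goals {
      intro m hm
      have hwm : (List.replicate m w).flatten ≠ [] := by
        cases m with
        | zero => omega
        | succ m =>
          rw [List.replicate_succ, List.flatten_cons]
          simp [hw]
      have hkey := key _ hwm
      rw [listProd_join_replicate] at hkey
      have hrr : R ((List.replicate m w).flatten) = (R w) ^ m := rList_join_replicate q w m
      rw [hrr] at hkey
      first
        | exact hkey.1
        | exact hkey.2
    }
  intro m k hm hk x y
  have hx : List.ofFn x ≠ [] := by
    intro h
    have := congrArg List.length h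
    simp at this
    omega
  have hy : List.ofFn y ≠ [] := by
    intro h
    have := congrArg List.length h
    simp at this
    omega
  have hxy : List.ofFn y ++ List.ofFn x ≠ [] := by simp [hx, hy]
  rw [wordProd_eq, wordProd_eq, ← listProd_append]
  rw [sR _ hxy, sR _ hx, sR _ hy]
  simp only [hR, List.map_append, List.prod_append]
  ring
end
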